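/- KKT screening for the group lasso: let λ > 0 and let β̂ be a minimizer over ℝ^p of the group lasso objective h_λ(β) = (1/(2n))‖y − Σ_{ℓ=1}^G X_ℓ β_ℓ‖² + λ Σ_{ℓ=1}^G √(W_ℓ) ‖β_ℓ‖. If for some group g one has ‖X_gᵀ(y − Σ_ℓ X_ℓ β̂_ℓ)‖ / n < λ√(W_g), then β̂_g = 0 (the entire coefficient subvector of group g vanishes). -/

import Mathlib

/-- The group lasso objective
`h_λ(β) = (1/(2n))‖y − Σ_g X_g β_g‖² + λ Σ_g √(W_g)‖β_g‖`. -/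
noncomputable def grpLassoObj (n G : ℕ) (W : Fin G → ℕ)
    (X : ∀ g : Fin G, Matrix (Fin n) (Fin (W g)) ℝ) (y : Fin n → ℝ) (lam : ℝ)
    (β : ∀ g : Fin G, Fin (W g) → ℝ) : ℝ :=
  (1 / (2 * (n : ℝ))) * ∑ i, (y i - ∑ g, ∑ t, X g i t * β g t) ^ 2 +
    lam * ∑ g, Real.sqrt (W g) * Real.sqrt (∑ t, (β g t) ^ 2)

/-- KKT screening for the group lasso: if `β̂` minimizes the group lasso objective with
`λ > 0` and `‖X_gᵀ(y − Σ_ℓ X_ℓ β̂_ℓ)‖/n < λ√(W_g)`, then `β̂_g = 0`. -/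
theorem grp_lasso_kkt_screening (n G : ℕ) (hn : 0 < n) (hG : 0 < G)
    (W : Fin G → ℕ) (hW : ∀ g, 0 < W g)
    (X : ∀ g : Fin G, Matrix (Fin n) (Fin (W g)) ℝ) (y : Fin n → ℝ)
    (lam : ℝ) (hlam : 0 < lam)
    (βh : ∀ g : Fin G, Fin (W g) → ℝ)
    (hmin : ∀ β : ∀ g : Fin G, Fin (W g) → ℝ,
      grpLassoObj n G W X y lam βh ≤ grpLassoObj n G W X y lam β)
    (g : Fin G)
    (hscreen : Real.sqrt (∑ t, (∑ i, X g i t * (y i - ∑ l, ∑ s, X l i s * βh l s)) ^ 2) /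
        (n : ℝ) < lam * Real.sqrt (W g)) :
    βh g = 0 := by
  by_contra hv
  -- notation
  set v : Fin (W g) → ℝ := βh g with hvdef
  set r : Fin n → ℝ := fun i => y i - ∑ l, ∑ s, X l i s * βh l s with hr
  set u : Fin n → ℝ := fun i => ∑ s, X g i s * v s with hu
  set ct : Fin (W g) → ℝ := fun t => ∑ i, X g i t * r i with hct
  have hnv : 0 < Real.sqrt (∑ t, (v t) ^ 2) := by
    rcases Function.ne_iff.mp hv with ⟨t0, ht0⟩
    apply Real.sqrt_pos.mpr
    have : 0 < (v t0) ^ 2 := lt_of_le_of_ne (sq_nonneg _) (Ne.symm (pow_ne_zero 2 ht0))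
    exact lt_of_lt_of_le this (Finset.single_le_sum (fun t _ => sq_nonneg (v t)) (Finset.mem_univ t0))
  set nv := Real.sqrt (∑ t, (v t) ^ 2) with hnvdef
  set S : ℝ := ∑ i, r i * u i with hS
  set A : ℝ := ∑ i, (u i) ^ 2 with hA
  have hnpos : (0 : ℝ) < n := by exact_mod_cast hn
  -- the key inequality from minimality, for each τ ∈ (0,1]
  have key : ∀ τ : ℝ, 0 < τ → τ ≤ 1 →
      lam * Real.sqrt (W g) * nv ≤ S / n + τ * A / (2 * n) := by
    intro τ hτ0 hτ1
    set w : Fin (W g) → ℝ := fun t => (1 - τ) * v t with hw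
    set β' := Function.update βh g w with hβ'
    have hβ'g : β' g = w := Function.update_self g w βh
    have hβ'l : ∀ l, l ≠ g → β' l = βh l := fun l hl => Function.update_of_ne hl w βh
    have hsum : ∀ (f : ∀ l : Fin G, (Fin (W l) → ℝ) → ℝ),
        ∑ l, f l (β' l) = f g w + (∑ l, f l (βh l) - f g v) := by
      intro f
      rw [← Finset.add_sum_erase _ (fun l => f l (β' l)) (Finset.mem_univ g),
          ← Finset.add_sum_erase _ (fun l => f l (βh l)) (Finset.mem_univ g), hβ'g]
      have : ∑ l ∈ Finset.univ.erase g, f l (β' l)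
          = ∑ l ∈ Finset.univ.erase g, f l (βh l) :=
        Finset.sum_congr rfl fun l hl => by rw [hβ'l l (Finset.ne_of_mem_erase hl)]
      rw [this]; ring
    have hres : ∀ i, y i - ∑ l, ∑ s, X l i s * β' l s = r i + τ * u i := by
      intro i
      have := hsum (fun l b => ∑ s, X l i s * b s)
      rw [this]
      have hws : ∑ s, X g i s * w s = (1 - τ) * ∑ s, X g i s * v s := by
        rw [Finset.mul_sum]; exact Finset.sum_congr rfl fun s _ => by rw [hw]; ring
      rw [hws, hr, hu]; ring
    have hpen : ∑ l, Real.sqrt (W l) * Real.sqrt (∑ t, (β' l t) ^ 2)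
        = (1 - τ) * (Real.sqrt (W g) * nv)
          + (∑ l, Real.sqrt (W l) * Real.sqrt (∑ t, (βh l t) ^ 2) - Real.sqrt (W g) * nv) := by
      have := hsum (fun l b => Real.sqrt (W l) * Real.sqrt (∑ t, (b t) ^ 2))
      rw [this]
      have hws : Real.sqrt (∑ t, (w t) ^ 2) = (1 - τ) * nv := by
        have h1 : ∑ t, (w t) ^ 2 = (1 - τ) ^ 2 * ∑ t, (v t) ^ 2 := by
          rw [Finset.mul_sum]; exact Finset.sum_congr rfl fun t _ => by rw [hw]; ring
        rw [h1, Real.sqrt_mul (sq_nonneg _), Real.sqrt_sq (by linarith), hnvdef]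
      rw [hws]; ring
    have hmin' := hmin β'
    rw [grpLassoObj, grpLassoObj] at hmin'
    have hressum : ∑ i, (y i - ∑ l, ∑ s, X l i s * β' l s) ^ 2
        = ∑ i, (r i) ^ 2 + (2 * τ * S + τ ^ 2 * A) := by
      have h1 : ∀ i : Fin n, (y i - ∑ l, ∑ s, X l i s * β' l s) ^ 2
          = (r i) ^ 2 + (2 * τ * (r i * u i) + τ ^ 2 * (u i) ^ 2) := by
        intro i; rw [hres i]; ring
      rw [Finset.sum_congr rfl fun i _ => h1 i, Finset.sum_add_distrib,
        Finset.sum_add_distrib, ← Finset.mul_sum, ← Finset.mul_sum, hS, hA]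
    have hysum : ∀ i, y i - ∑ l, ∑ s, X l i s * βh l s = r i := fun i => rfl
    simp only [hysum] at hmin'
    rw [hressum, hpen] at hmin'
    -- hmin' : (1/(2n)) ∑ r² + lam * ∑pen ≤ (1/(2n)) (∑r² + 2τS + τ²A) + lam * ((1-τ)√Wg nv + (∑pen - √Wg nv))
    have h2 : lam * τ * (Real.sqrt (W g) * nv) ≤ (1 / (2 * n)) * (2 * τ * S + τ ^ 2 * A) := by
      nlinarith [hmin']
    have h3 : (1 / (2 * n)) * (2 * τ * S + τ ^ 2 * A) = τ * (S / n + τ * A / (2 * n)) := by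
      field_simp
    rw [h3] at h2
    have := le_of_mul_le_mul_left (by rw [mul_comm τ] at h2; linarith [h2] : τ * (lam * Real.sqrt (W g) * nv) ≤ τ * (S / n + τ * A / (2 * n))) hτ0
    linarith [this]
  -- Cauchy–Schwarz: S ≤ √(∑ ct²) * nv
  have hSswap : S = ∑ t, ct t * v t := by
    rw [hS]
    simp only [hu, hct, Finset.mul_sum]
    rw [Finset.sum_comm]
    refine Finset.sum_congr rfl fun t _ => ?_
    rw [Finset.sum_mul]
    exact Finset.sum_congr rfl fun i _ => by ring
  -- Cauchy–Schwarz
  set C := Real.sqrt (∑ t, (ct t) ^ 2) with hC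
  have hCS : S ≤ C * nv := by
    rw [hSswap]
    calc ∑ t, ct t * v t ≤ |∑ t, ct t * v t| := le_abs_self _
    _ ≤ C * nv := by
        rw [hC, hnvdef, ← Real.sqrt_mul (Finset.sum_nonneg fun t _ => sq_nonneg _), ← Real.sqrt_sq_eq_abs]
        exact Real.sqrt_le_sqrt (Finset.sum_mul_sq_le_sq_mul_sq _ _ _)
  have hCn : C / n < lam * Real.sqrt (W g) := hscreen
  have hSn : S / n < lam * Real.sqrt (W g) * nv := by
    have h1 : S / n ≤ C * nv / n := by gcongr
    have h2 : C * nv / n = C / n * nv := by ring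
    have h3 : C / n * nv < lam * Real.sqrt (W g) * nv := mul_lt_mul_of_pos_right hCn hnv
    linarith
  -- choose a small step size to derive a contradiction
  set δ := lam * Real.sqrt (W g) * nv - S / n with hδ
  have hδpos : 0 < δ := by rw [hδ]; linarith
  have hA0 : 0 ≤ A := Finset.sum_nonneg fun i _ => sq_nonneg _
  set τ := min 1 ((n : ℝ) * δ / (A + 1)) with hτ
  have hτ0 : 0 < τ := lt_min one_pos (by positivity)
  have hτ1 : τ ≤ 1 := min_le_left _ _
  have hk := key τ hτ0 hτ1
  have hτA : τ * A ≤ n * δ := by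
    calc τ * A ≤ ((n : ℝ) * δ / (A + 1)) * A :=
          mul_le_mul_of_nonneg_right (min_le_right _ _) hA0
    _ ≤ n * δ := by
        rw [div_mul_eq_mul_div, div_le_iff₀ (by positivity)]
        nlinarith
  have h5 : τ * A / (2 * n) ≤ δ / 2 := by
    rw [div_le_div_iff₀ (by positivity) two_pos]
    nlinarith
  rw [hδ] at h5
  linarith
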